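/- Let L ≥ 2 be an integer, σ_b = 0, and x, x' ∈ ℝ^d nonzero. Then K^(L+1)(x,x') > 0 and Σ_{ℓ=1}^{L+1} ( ρ^ℓ(−1) / ρ^{L+1}(1) )·Π_{ℓ'=ℓ+1}^{L+1} ρ'( ρ^{ℓ'−1}(−1) ) ≤ Θ(x,x')/K^(L+1)(x,x') ≤ Σ_{ℓ=1}^{L+1} ( ρ^ℓ(1) / ρ^{L+1}(−1) )·Π_{ℓ'=ℓ+1}^{L+1} ρ'( ρ^{ℓ'−1}(1) ), where ρ^m denotes the m-fold iterate of ρ. -/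

import Mathlib

open Real

/-- The dual activation function of the scaled ReLU `φ(t) = √2·max(t,0)`. -/
noncomputable def rho (r : ℝ) : ℝ :=
  (1 / π) * (Real.sqrt (1 - r ^ 2) + (π - Real.arccos r) * r)

/-- The dual activation function of the derivative of the scaled ReLU. -/
noncomputable def rhoPrime (r : ℝ) : ℝ := (π - Real.arccos r) / π

/-- The depth-`ℓ` NNGP kernel `K^(ℓ)` of a ReLU network with bias variance `σb²`,
defined recursively by `K^(0)(v,w) = ⟪v,w⟫` and
`K^(ℓ)(v,w) = √(K^(ℓ−1)(v,v)·K^(ℓ−1)(w,w))·ρ(K^(ℓ−1)(v,w)/√(K^(ℓ−1)(v,v)·K^(ℓ−1)(w,w))) + σb²`. -/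
noncomputable def Kker (σb : ℝ) {d : ℕ} :
    ℕ → EuclideanSpace ℝ (Fin d) → EuclideanSpace ℝ (Fin d) → ℝ
  | 0, v, w => (inner ℝ v w : ℝ)
  | ℓ + 1, v, w =>
      Real.sqrt (Kker σb ℓ v v * Kker σb ℓ w w) *
        rho (Kker σb ℓ v w / Real.sqrt (Kker σb ℓ v v * Kker σb ℓ w w)) + σb ^ 2

/-- `u^(ℓ) = (‖x‖² + ℓσ_b²)·(‖x'‖² + ℓσ_b²)`, stated for the norms `a = ‖x‖`, `b = ‖x'‖`. -/
noncomputable def uFun (σb a b : ℝ) (ℓ : ℕ) : ℝ :=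
  (a ^ 2 + ℓ * σb ^ 2) * (b ^ 2 + ℓ * σb ^ 2)

/-- `K̇^(ℓ)(v,w) = ρ'( K^(ℓ−1)(v,w) / √(K^(ℓ−1)(v,v)·K^(ℓ−1)(w,w)) )` for `ℓ ≥ 1`
(the value at `ℓ = 0` is junk). -/
noncomputable def Kdot (σb : ℝ) {d : ℕ} :
    ℕ → EuclideanSpace ℝ (Fin d) → EuclideanSpace ℝ (Fin d) → ℝ
  | 0, _, _ => 1
  | ℓ + 1, v, w =>
      rhoPrime (Kker σb ℓ v w / Real.sqrt (Kker σb ℓ v v * Kker σb ℓ w w))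

/-- The neural tangent kernel of an `L`-hidden-layer ReLU network:
`Θ(x,x') = Σ_{ℓ=1}^{L+1} K^(ℓ)(x,x') · Π_{ℓ'=ℓ+1}^{L+1} K̇^(ℓ')(x,x')`. -/
noncomputable def ntk (σb : ℝ) {d : ℕ} (L : ℕ)
    (v w : EuclideanSpace ℝ (Fin d)) : ℝ :=
  ∑ ℓ ∈ Finset.Icc 1 (L + 1),
    Kker σb ℓ v w * ∏ ℓ' ∈ Finset.Icc (ℓ + 1) (L + 1), Kdot σb ℓ' v w

/-! With `σ_b = 0` the kernels are positively homogeneous: writing `c = cos ∠(x, x')`,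
`K^(ℓ)(x,x') = ‖x‖‖x'‖ ρ^ℓ(c)` and `K̇^(ℓ)(x,x') = ρ'(ρ^{ℓ-1}(c))`, so `Θ/K` is the ratio
`dualNtk L c / ρ^{L+1}(c)` of two functions of `c` alone. Since `ρ' ≥ 0` is the derivative
of `ρ`, both are monotone on `[-1, 1]` (where `ρ` takes values in `[0, 1]`), and
`ρ^{L+1}(-1) ≥ ρ(0) = 1/π > 0`. Bounding the numerator and the denominator by their values
at opposite ends of `[-1, 1]` gives the two inequalities. -/

open InnerProductGeometry Set

theorem MonotoneOn.iterate_of_mapsTo {α : Type*} [Preorder α] {f : α → α} {s : Set α}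
    (hf : MonotoneOn f s) (hs : MapsTo f s s) (n : ℕ) : MonotoneOn f^[n] s := by
  induction n with
  | zero => exact monotone_id.monotoneOn s
  | succ n ih =>
    rw [Function.iterate_succ']
    exact hf.comp ih (hs.iterate n)

lemma rho_one : rho 1 = 1 := by
  simp [rho, Real.pi_ne_zero]

lemma rho_neg_one : rho (-1) = 0 := by
  simp [rho]

lemma rho_zero : rho 0 = 1 / π := by
  simp [rho]

lemma rhoPrime_nonneg (r : ℝ) : 0 ≤ rhoPrime r :=
  div_nonneg (by linarith [arccos_le_pi r]) pi_pos.le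

lemma rhoPrime_mono : Monotone rhoPrime := fun r s h => by
  unfold rhoPrime
  gcongr

lemma hasDerivAt_rho {r : ℝ} (h₁ : -1 < r) (h₂ : r < 1) : HasDerivAt rho (rhoPrime r) r := by
  have hs : 0 < 1 - r ^ 2 := by nlinarith
  have hsqrt := ((hasDerivAt_pow 2 r).const_sub 1).sqrt hs.ne'
  have harccos := (hasDerivAt_arccos h₁.ne' h₂.ne).const_sub π
  have hρ : HasDerivAt rho _ r := (hsqrt.add (harccos.mul (hasDerivAt_id r))).const_mul (1 / π)
  refine hρ.congr_deriv ?_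
  rw [rhoPrime, id]
  field_simp
  ring

lemma monotoneOn_rho : MonotoneOn rho (Icc (-1) 1) := by
  have hcont : Continuous rho := by unfold rho; fun_prop
  refine monotoneOn_of_deriv_nonneg (convex_Icc _ _) hcont.continuousOn ?_ ?_ <;>
    rw [interior_Icc]
  · exact fun r hr => (hasDerivAt_rho hr.1 hr.2).differentiableAt.differentiableWithinAt
  · exact fun r hr => (hasDerivAt_rho hr.1 hr.2).deriv ▸ rhoPrime_nonneg r

lemma rho_mem_Icc_zero_one {r : ℝ} (hr : r ∈ Icc (-1) 1) : rho r ∈ Icc 0 1 := by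
  have hlo := monotoneOn_rho (left_mem_Icc.2 (by norm_num)) hr hr.1
  have hhi := monotoneOn_rho hr (right_mem_Icc.2 (by norm_num)) hr.2
  rw [rho_neg_one] at hlo
  rw [rho_one] at hhi
  exact ⟨hlo, hhi⟩

lemma mapsTo_rho : MapsTo rho (Icc (-1) 1) (Icc (-1) 1) := fun _ hr =>
  Icc_subset_Icc (by norm_num) le_rfl (rho_mem_Icc_zero_one hr)

lemma monotoneOn_iterate_rho (n : ℕ) : MonotoneOn rho^[n] (Icc (-1) 1) :=
  monotoneOn_rho.iterate_of_mapsTo mapsTo_rho n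

lemma iterate_rho_nonneg {r : ℝ} (hr : r ∈ Icc (-1) 1) {n : ℕ} (hn : 1 ≤ n) :
    0 ≤ rho^[n] r := by
  obtain ⟨m, rfl⟩ := Nat.exists_eq_add_of_le' hn
  rw [Function.iterate_succ_apply']
  exact (rho_mem_Icc_zero_one (mapsTo_rho.iterate m hr)).1

lemma iterate_rho_pos {r : ℝ} (hr : r ∈ Icc (-1) 1) {n : ℕ} (hn : 2 ≤ n) :
    0 < rho^[n] r := by
  obtain ⟨m, rfl⟩ := Nat.exists_eq_add_of_le' hn
  rw [Function.iterate_succ_apply']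
  have hρ0 : rho 0 ≤ rho (rho^[m + 1] r) :=
    monotoneOn_rho (by norm_num) (mapsTo_rho.iterate _ hr) (iterate_rho_nonneg hr (by omega))
  rw [rho_zero] at hρ0
  exact lt_of_lt_of_le (by positivity) hρ0

noncomputable def dualNtk (L : ℕ) (r : ℝ) : ℝ :=
  ∑ ℓ ∈ Finset.Icc 1 (L + 1),
    rho^[ℓ] r * ∏ ℓ' ∈ Finset.Icc (ℓ + 1) (L + 1), rhoPrime (rho^[ℓ' - 1] r)

lemma sum_div_mul_prod_eq_dualNtk_div (L : ℕ) (r a : ℝ) :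
    ∑ ℓ ∈ Finset.Icc 1 (L + 1),
        (rho^[ℓ] r / a) * ∏ ℓ' ∈ Finset.Icc (ℓ + 1) (L + 1), rhoPrime (rho^[ℓ' - 1] r) =
      dualNtk L r / a := by
  rw [dualNtk, Finset.sum_div]
  exact Finset.sum_congr rfl fun _ _ => div_mul_eq_mul_div _ _ _

lemma dualNtk_nonneg (L : ℕ) {r : ℝ} (hr : r ∈ Icc (-1) 1) : 0 ≤ dualNtk L r :=
  Finset.sum_nonneg fun _ hℓ => mul_nonneg (iterate_rho_nonneg hr (Finset.mem_Icc.1 hℓ).1)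
    (Finset.prod_nonneg fun _ _ => rhoPrime_nonneg _)

lemma monotoneOn_dualNtk (L : ℕ) : MonotoneOn (dualNtk L) (Icc (-1) 1) := by
  intro r hr s hs hrs
  refine Finset.sum_le_sum fun ℓ hℓ => mul_le_mul (monotoneOn_iterate_rho ℓ hr hs hrs) ?_
    (Finset.prod_nonneg fun _ _ => rhoPrime_nonneg _)
    (iterate_rho_nonneg hs (Finset.mem_Icc.1 hℓ).1)
  exact Finset.prod_le_prod (fun _ _ => rhoPrime_nonneg _)
    fun ℓ' _ => rhoPrime_mono (monotoneOn_iterate_rho _ hr hs hrs)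

lemma cos_angle_mem_Icc {V : Type*} [NormedAddCommGroup V] [InnerProductSpace ℝ V] (x y : V) :
    cos (angle x y) ∈ Icc (-1) 1 :=
  ⟨neg_one_le_cos _, cos_le_one _⟩

section Kernels

variable {d : ℕ}

lemma Kker_zero_self (v : EuclideanSpace ℝ (Fin d)) (ℓ : ℕ) : Kker 0 ℓ v v = ‖v‖ ^ 2 := by
  induction ℓ with
  | zero => exact real_inner_self_eq_norm_sq v
  | succ n ih =>
    rw [Kker, ih, Real.sqrt_mul_self (sq_nonneg _)]
    rcases eq_or_ne ‖v‖ 0 with hv | hv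
    · simp [hv]
    · rw [div_self (by positivity), rho_one]
      ring

lemma sqrt_Kker_zero_self_mul (x x' : EuclideanSpace ℝ (Fin d)) (ℓ : ℕ) :
    √(Kker 0 ℓ x x * Kker 0 ℓ x' x') = ‖x‖ * ‖x'‖ := by
  rw [Kker_zero_self, Kker_zero_self, ← mul_pow, Real.sqrt_sq (by positivity)]

lemma Kker_zero_eq (x x' : EuclideanSpace ℝ (Fin d)) (ℓ : ℕ) :
    Kker 0 ℓ x x' = ‖x‖ * ‖x'‖ * rho^[ℓ] (cos (angle x x')) := by
  induction ℓ with
  | zero => rw [Kker, ← cos_angle_mul_norm_mul_norm, Function.iterate_zero_apply, mul_comm]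
  | succ n ih =>
    rw [Kker, sqrt_Kker_zero_self_mul, ih, Function.iterate_succ_apply']
    rcases eq_or_ne (‖x‖ * ‖x'‖) 0 with h | h
    · simp [h]
    · rw [mul_div_cancel_left₀ _ h]
      ring

lemma Kdot_zero_eq {x x' : EuclideanSpace ℝ (Fin d)} (hx : x ≠ 0) (hx' : x' ≠ 0) {ℓ : ℕ}
    (hℓ : 1 ≤ ℓ) : Kdot 0 ℓ x x' = rhoPrime (rho^[ℓ - 1] (cos (angle x x'))) := by
  obtain ⟨m, rfl⟩ := Nat.exists_eq_add_of_le' hℓ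
  have h : ‖x‖ * ‖x'‖ ≠ 0 := by positivity
  rw [Kdot, sqrt_Kker_zero_self_mul, Kker_zero_eq, mul_div_cancel_left₀ _ h, Nat.add_sub_cancel]

lemma ntk_zero_eq {x x' : EuclideanSpace ℝ (Fin d)} (hx : x ≠ 0) (hx' : x' ≠ 0) (L : ℕ) :
    ntk 0 L x x' = ‖x‖ * ‖x'‖ * dualNtk L (cos (angle x x')) := by
  rw [ntk, dualNtk, Finset.mul_sum]
  refine Finset.sum_congr rfl fun ℓ _ => ?_
  rw [Kker_zero_eq, mul_assoc]
  congr 2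
  exact Finset.prod_congr rfl fun ℓ' hℓ' => Kdot_zero_eq hx hx' (by grind)

end Kernels

/-- Theorem A.15 (bias-free case `σ_b = 0`): for `L ≥ 2` and nonzero `x, x'`,
`K^(L+1)(x,x') > 0` and
`Σ_{ℓ=1}^{L+1} (ρ^ℓ(−1)/ρ^{L+1}(1))·Π_{ℓ'=ℓ+1}^{L+1} ρ'(ρ^{ℓ'−1}(−1))
  ≤ Θ(x,x')/K^(L+1)(x,x')
  ≤ Σ_{ℓ=1}^{L+1} (ρ^ℓ(1)/ρ^{L+1}(−1))·Π_{ℓ'=ℓ+1}^{L+1} ρ'(ρ^{ℓ'−1}(1))`. -/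
theorem ntk_div_Kker_bound_no_bias (L : ℕ) (hL : 2 ≤ L) {d : ℕ}
    (x x' : EuclideanSpace ℝ (Fin d)) (hx : x ≠ 0) (hx' : x' ≠ 0) :
    0 < Kker (0 : ℝ) (L + 1) x x' ∧
    ∑ ℓ ∈ Finset.Icc 1 (L + 1),
        (rho^[ℓ] (-1) / rho^[L + 1] 1) *
          ∏ ℓ' ∈ Finset.Icc (ℓ + 1) (L + 1), rhoPrime (rho^[ℓ' - 1] (-1)) ≤
      ntk (0 : ℝ) L x x' / Kker (0 : ℝ) (L + 1) x x' ∧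
    ntk (0 : ℝ) L x x' / Kker (0 : ℝ) (L + 1) x x' ≤
      ∑ ℓ ∈ Finset.Icc 1 (L + 1),
        (rho^[ℓ] 1 / rho^[L + 1] (-1)) *
          ∏ ℓ' ∈ Finset.Icc (ℓ + 1) (L + 1), rhoPrime (rho^[ℓ' - 1] 1) := by
  set c := cos (angle x x')
  have hc : c ∈ Icc (-1) 1 := cos_angle_mem_Icc x x'
  have hnorm : 0 < ‖x‖ * ‖x'‖ := by positivity
  have hK : Kker 0 (L + 1) x x' = ‖x‖ * ‖x'‖ * rho^[L + 1] c := Kker_zero_eq x x' _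
  have hpos : ∀ {r}, r ∈ Icc (-1) 1 → 0 < rho^[L + 1] r := fun hr => iterate_rho_pos hr (by omega)
  have hratio : ntk 0 L x x' / Kker 0 (L + 1) x x' = dualNtk L c / rho^[L + 1] c := by
    rw [ntk_zero_eq hx hx', hK, mul_div_mul_left _ _ hnorm.ne']
  have hneg : (-1 : ℝ) ∈ Icc (-1) 1 := left_mem_Icc.2 (by norm_num)
  have hone : (1 : ℝ) ∈ Icc (-1) 1 := right_mem_Icc.2 (by norm_num)
  refine ⟨hK ▸ mul_pos hnorm (hpos hc), ?_, ?_⟩ <;>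
    rw [hratio, sum_div_mul_prod_eq_dualNtk_div]
  · exact div_le_div₀ (dualNtk_nonneg L hc) (monotoneOn_dualNtk L hneg hc hc.1) (hpos hc)
      (monotoneOn_iterate_rho _ hc hone hc.2)
  · exact div_le_div₀ (dualNtk_nonneg L hone) (monotoneOn_dualNtk L hc hone hc.2) (hpos hneg)
      (monotoneOn_iterate_rho _ hneg hc hc.1)
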